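/- arXiv:1507.02720 — 2 statements merged into one kernel-verified Lean document; each statement's English description precedes it below -/
import Mathlib

section
/- Let p ≥ 3 and let a₁, …, a_p be real numbers such that aᵢ + aⱼ ∈ {−1, 1} for all i < j. Then either all the aᵢ are equal to 1/2, or all are equal to −1/2, or there is exactly one index i with aᵢ ∈ {3/2, −3/2} and all other aⱼ equal −aᵢ/3 (that is, aⱼ = −1/2 if aᵢ = 3/2, and aⱼ = 1/2 if aᵢ = −3/2). -/
/-!
Any three of the `aᵢ` determine each of them: `2aᵢ = (aᵢ + aⱼ) + (aᵢ + aₖ) - (aⱼ + aₖ)` lies in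
`{±1, ±3}`, so every `aᵢ` is `±1/2` or `±3/2`. If some `aᵢ = ±3/2`, then `aᵢ + aⱼ = ±1` leaves
`aⱼ = ∓1/2` as the only possible value among these four. Otherwise all `aᵢ` are `±1/2`, and two
such numbers summing to `±1` are equal.
-/

open Cardinal Function

def SumIsPmOne (x y : ℝ) : Prop := x + y = 1 ∨ x + y = -1

lemma SumIsPmOne.symm {x y : ℝ} (h : SumIsPmOne x y) : SumIsPmOne y x := by
  rwa [SumIsPmOne, add_comm]

lemma eq_pm_half_or_pm_three_halves_of_sumIsPmOne {x y z : ℝ} (hxy : SumIsPmOne x y)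
    (hxz : SumIsPmOne x z) (hyz : SumIsPmOne y z) :
    x = 3 / 2 ∨ x = 1 / 2 ∨ x = -(1 / 2) ∨ x = -(3 / 2) := by
  have hx : x = ((x + y) + (x + z) - (y + z)) / 2 := by ring
  rcases hxy with hxy | hxy <;> rcases hxz with hxz | hxz <;> rcases hyz with hyz | hyz <;>
    rw [hx, hxy, hxz, hyz] <;> norm_num

lemma eq_neg_div_three_of_sumIsPmOne {x y : ℝ} (hx : x = 3 / 2 ∨ x = -(3 / 2))
    (hy : y = 3 / 2 ∨ y = 1 / 2 ∨ y = -(1 / 2) ∨ y = -(3 / 2)) (hxy : SumIsPmOne x y) :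
    y = -x / 3 := by
  rcases hx with rfl | rfl <;> rcases hy with rfl | rfl | rfl | rfl <;>
    norm_num [SumIsPmOne] at *

lemma eq_of_sumIsPmOne_of_pm_half {x y : ℝ} (hx : x = 1 / 2 ∨ x = -(1 / 2))
    (hy : y = 1 / 2 ∨ y = -(1 / 2)) (hxy : SumIsPmOne x y) : x = y := by
  rcases hx with rfl | rfl <;> rcases hy with rfl | rfl <;> norm_num [SumIsPmOne] at *

lemma Cardinal.exists_ne_ne_ne_of_three_le {ι : Type*} (h : 3 ≤ #ι) (i : ι) :
    ∃ j k : ι, j ≠ i ∧ k ≠ i ∧ j ≠ k := by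
  obtain ⟨j, hji, -⟩ := exists_ne_ne_of_three_le h i i
  obtain ⟨k, hki, hkj⟩ := exists_ne_ne_of_three_le h i j
  exact ⟨j, k, hji, hki, hkj.symm⟩

section

variable {ι : Type*} {a : ι → ℝ}

lemma eq_pm_half_or_pm_three_halves_of_pairwise (h3 : 3 ≤ #ι)
    (ha : Pairwise (SumIsPmOne on a)) (i : ι) :
    a i = 3 / 2 ∨ a i = 1 / 2 ∨ a i = -(1 / 2) ∨ a i = -(3 / 2) := by
  obtain ⟨j, k, hji, hki, hjk⟩ := exists_ne_ne_ne_of_three_le h3 i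
  exact eq_pm_half_or_pm_three_halves_of_sumIsPmOne (ha hji.symm) (ha hki.symm) (ha hjk)

theorem eq_half_or_eq_neg_half_or_three_halves_of_pairwise (h3 : 3 ≤ #ι)
    (ha : Pairwise (SumIsPmOne on a)) :
    (∀ i, a i = 1 / 2) ∨ (∀ i, a i = -(1 / 2)) ∨
    (∃ i, (a i = 3 / 2 ∨ a i = -(3 / 2)) ∧ ∀ j, j ≠ i → a j = -(a i) / 3) := by
  have hval := eq_pm_half_or_pm_three_halves_of_pairwise h3 ha
  by_cases hbig : ∃ i, a i = 3 / 2 ∨ a i = -(3 / 2)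
  · obtain ⟨i, hi⟩ := hbig
    exact Or.inr <| Or.inr
      ⟨i, hi, fun j hji => eq_neg_div_three_of_sumIsPmOne hi (hval j) (ha hji.symm)⟩
  push Not at hbig
  have hhalf : ∀ i, a i = 1 / 2 ∨ a i = -(1 / 2) := fun i => by
    have := hval i
    have := hbig i
    tauto
  have hconst : ∀ i j, a i = a j := fun i j =>
    (eq_or_ne i j).elim (congrArg a) fun hij =>
      eq_of_sumIsPmOne_of_pm_half (hhalf i) (hhalf j) (ha hij)
  by_cases hpos : ∃ i, a i = 1 / 2
  · obtain ⟨i, hi⟩ := hpos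
    exact Or.inl fun j => (hconst j i).trans hi
  · push Not at hpos
    exact Or.inr <| Or.inl fun j => (hhalf j).resolve_left (hpos j)

end

/-- If `p ≥ 3` and `aᵢ + aⱼ ∈ {−1, 1}` for all `i < j`, then either all `aᵢ = 1/2`,
or all `aᵢ = −1/2`, or exactly one index has `aᵢ ∈ {3/2, −3/2}` and all others equal
`−aᵢ/3`. -/
theorem pairwise_sums_pm_one_characterization
    {p : ℕ} (hp : 3 ≤ p) (a : Fin p → ℝ)
    (h : ∀ i j : Fin p, i < j → a i + a j = 1 ∨ a i + a j = -1) :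
    (∀ i, a i = 1 / 2) ∨ (∀ i, a i = -(1 / 2)) ∨
    (∃ i, (a i = 3 / 2 ∨ a i = -(3 / 2)) ∧ ∀ j, j ≠ i → a j = -(a i) / 3) := by
  have h3 : 3 ≤ #(Fin p) := by
    rw [mk_fin]
    exact_mod_cast hp
  refine eq_half_or_eq_neg_half_or_three_halves_of_pairwise h3 fun i j hij => ?_
  exact hij.lt_or_gt.elim (h i j) fun hji => SumIsPmOne.symm (h j i hji)
end

section
/- Let k ≥ 1, let ε₁, …, ε_k ∈ {−1, 1}, and suppose the diagonal matrix Y = diag(ε₁ i, …, ε_k i) belongs to the image of a Lie algebra homomorphism from su(2) into u(k) (equivalently, Y lies in a Lie subalgebra of u(k) isomorphic to su(2)). Then k is even and exactly k/2 of the εⱼ equal +1. Conversely, if k is even, the diagonal matrix with k/2 entries equal to i and k/2 entries equal to −i lies in a subalgebra of u(k) isomorphic to su(2). -/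
/-!
Since `su(2)` is spanned by its brackets (`⁅e₂, e₃⁆ = 2 e₁` and cyclically), every matrix
representation of it is traceless. A diagonal `diag(ε₁ i, …, ε_k i)` in the image thus has
`∑ εⱼ = 0`, so the signs `±1` are balanced. Conversely `X ↦ X ⊗ 1_m` is a representation of
`su(2)` in `u(2m)`, and it sends `diag(i, -i)` to the balanced diagonal.
-/

open Matrix

attribute [local instance 100] LieRing.ofAssociativeRing

def su2 : LieSubalgebra ℝ (Matrix (Fin 2) (Fin 2) ℂ) :=
{ carrier := {A | A.trace = 0 ∧ Aᴴ = -A},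
  add_mem' := by
    rintro a b ⟨ha1, ha2⟩ ⟨hb1, hb2⟩
    exact ⟨by simp [Matrix.trace_add, ha1, hb1],
      by simp [Matrix.conjTranspose_add, ha2, hb2]; abel⟩,
  zero_mem' := by simp,
  smul_mem' := by
    rintro c a ⟨ha1, ha2⟩
    exact ⟨by simp [Matrix.trace_smul, ha1], by simp [Matrix.conjTranspose_smul, ha2]⟩,
  lie_mem' := by
    rintro a b ⟨ha1, ha2⟩ ⟨hb1, hb2⟩
    constructor
    · simp [Ring.lie_def, Matrix.trace_sub, Matrix.trace_mul_comm a b]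
    · simp [Ring.lie_def, Matrix.conjTranspose_sub, Matrix.conjTranspose_mul, ha2, hb2] }

open Kronecker

section Trace

variable {R L A n : Type*} [CommRing R] [LieRing L] [LieAlgebra R L] [CommRing A] [Algebra R A]
  [Fintype n] [DecidableEq n]

theorem LieHom.trace_eq_zero_of_lie_top_eq_top
    (hL : ⁅(⊤ : LieIdeal R L), (⊤ : LieIdeal R L)⁆ = ⊤) (f : L →ₗ⁅R⁆ Matrix n n A) (x : L) :
    (f x).trace = 0 := by
  have hle : LieSubmodule.toSubmodule ⁅(⊤ : LieIdeal R L), (⊤ : LieIdeal R L)⁆ ≤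
      LinearMap.ker ((traceLinearMap n R A).comp (f : L →ₗ[R] Matrix n n A)) := by
    rw [LieSubmodule.lieIdeal_oper_eq_linear_span, Submodule.span_le]
    rintro _ ⟨⟨y, -⟩, ⟨z, -⟩, rfl⟩
    simp
  rw [hL] at hle
  exact hle (Submodule.mem_top (x := x))

end Trace

section KroneckerOne

variable (R α m n : Type*) [CommSemiring R] [CommSemiring α] [Algebra R α]
  [Fintype m] [DecidableEq m] [Fintype n] [DecidableEq n]

def Matrix.kroneckerOneAlgHom : Matrix m m α →ₐ[R] Matrix (m × n) (m × n) α :=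
  AlgHom.ofLinearMap
    { toFun := fun A => A ⊗ₖ (1 : Matrix n n α)
      map_add' := fun A B => add_kronecker A B 1
      map_smul' := fun r A => smul_kronecker r A 1 }
    one_kronecker_one fun A B => by simp [← mul_kronecker_mul]

end KroneckerOne

theorem two_mul_card_filter_eq_one_of_sum_eq_zero {ι : Type*} [Fintype ι] (ε : ι → ℝ)
    (hε : ∀ j, ε j = 1 ∨ ε j = -1) (hsum : ∑ j, ε j = 0) :
    2 * (Finset.univ.filter fun j => ε j = 1).card = Fintype.card ι := by
  have hsign : ∀ j, ε j = if ε j = 1 then 1 else -1 := fun j => by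
    rcases hε j with h | h <;> simp [h]
  have hcard := Finset.card_filter_add_card_filter_not (s := Finset.univ) (fun j => ε j = 1)
  rw [Fintype.sum_congr _ _ hsign, Finset.sum_ite] at hsum
  simp only [Finset.sum_const, nsmul_eq_mul, mul_one, mul_neg] at hsum
  rw [Finset.card_univ] at hcard
  have : ((Finset.univ.filter fun j => ε j = 1).card : ℝ) =
      (Finset.univ.filter fun j => ¬ ε j = 1).card := by linarith
  norm_cast at this
  omega

namespace su2

open Complex

def e₁ : su2 := ⟨!![I, 0; 0, -I], by
  refine ⟨by simp [trace_fin_two], ?_⟩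
  ext i j; fin_cases i <;> fin_cases j <;> simp⟩

def e₂ : su2 := ⟨!![0, 1; -1, 0], by
  refine ⟨by simp [trace_fin_two], ?_⟩
  ext i j; fin_cases i <;> fin_cases j <;> simp⟩

def e₃ : su2 := ⟨!![0, I; I, 0], by
  refine ⟨by simp [trace_fin_two], ?_⟩
  ext i j; fin_cases i <;> fin_cases j <;> simp⟩

theorem lie_e₂_e₃ : ⁅e₂, e₃⁆ = (2 : ℝ) • e₁ := by
  apply Subtype.ext
  ext i j; fin_cases i <;> fin_cases j <;> simp [e₁, e₂, e₃, Ring.lie_def] <;> ring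

theorem lie_e₃_e₁ : ⁅e₃, e₁⁆ = (2 : ℝ) • e₂ := by
  apply Subtype.ext
  ext i j; fin_cases i <;> fin_cases j <;> simp [e₁, e₂, e₃, Ring.lie_def] <;> ring

theorem lie_e₁_e₂ : ⁅e₁, e₂⁆ = (2 : ℝ) • e₃ := by
  apply Subtype.ext
  ext i j; fin_cases i <;> fin_cases j <;> simp [e₁, e₂, e₃, Ring.lie_def] <;> ring

theorem eq_smul_e₁_add_smul_e₂_add_smul_e₃ (X : su2) :
    X = ((X : Matrix (Fin 2) (Fin 2) ℂ) 0 0).im • e₁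
      + ((X : Matrix (Fin 2) (Fin 2) ℂ) 0 1).re • e₂
      + ((X : Matrix (Fin 2) (Fin 2) ℂ) 0 1).im • e₃ := by
  obtain ⟨X, htr, hskew⟩ := X
  have hX : ∀ i j, star (X j i) = -X i j := fun i j => by
    simpa using congrFun₂ hskew i j
  have h11 : X 1 1 = -X 0 0 := by
    rw [trace_fin_two] at htr; linear_combination htr
  have h10 := hX 1 0
  have h00 := hX 0 0
  apply Subtype.ext
  ext i j; fin_cases i <;> fin_cases j <;> apply Complex.ext <;>
    simp [e₁, e₂, e₃, Complex.ext_iff] at h00 h10 h11 ⊢ <;> linarith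

theorem lie_top_eq_top : ⁅(⊤ : LieIdeal ℝ su2), (⊤ : LieIdeal ℝ su2)⁆ = ⊤ := by
  have mem_of_lie_eq : ∀ x y z : su2, ⁅y, z⁆ = (2 : ℝ) • x →
      x ∈ ⁅(⊤ : LieIdeal ℝ su2), (⊤ : LieIdeal ℝ su2)⁆ := by
    intro x y z h
    have hx : x = (2 : ℝ)⁻¹ • ⁅y, z⁆ := by rw [h, smul_smul]; norm_num
    rw [hx]
    exact SMulMemClass.smul_mem _ (LieSubmodule.lie_mem_lie trivial trivial)
  rw [eq_top_iff]
  rintro X -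
  rw [eq_smul_e₁_add_smul_e₂_add_smul_e₃ X]
  exact add_mem (add_mem (SMulMemClass.smul_mem _ (mem_of_lie_eq _ _ _ lie_e₂_e₃))
    (SMulMemClass.smul_mem _ (mem_of_lie_eq _ _ _ lie_e₃_e₁)))
    (SMulMemClass.smul_mem _ (mem_of_lie_eq _ _ _ lie_e₁_e₂))

section KroneckerRep

variable {ι κ : Type*} [Fintype ι] [DecidableEq ι] [Fintype κ] [DecidableEq κ]

noncomputable def kroneckerRep (e : ι ≃ Fin 2 × κ) : su2 →ₗ⁅ℝ⁆ Matrix ι ι ℂ :=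
  ((reindexAlgEquiv ℝ ℂ e.symm).toAlgHom.comp (kroneckerOneAlgHom ℝ ℂ (Fin 2) κ)).toLieHom.comp
    su2.incl

theorem kroneckerRep_apply (e : ι ≃ Fin 2 × κ) (X : su2) :
    kroneckerRep e X = ((X : Matrix (Fin 2) (Fin 2) ℂ) ⊗ₖ (1 : Matrix κ κ ℂ)).submatrix e e :=
  rfl

theorem kroneckerRep_conjTranspose (e : ι ≃ Fin 2 × κ) (X : su2) :
    (kroneckerRep e X)ᴴ = -kroneckerRep e X := by
  calc (kroneckerRep e X)ᴴ = kroneckerRep e (-X) := by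
        rw [kroneckerRep_apply, kroneckerRep_apply, conjTranspose_submatrix,
          conjTranspose_kronecker, conjTranspose_one, X.2.2]
        rfl
    _ = -kroneckerRep e X := map_neg _ _

theorem kroneckerRep_e₁ (e : ι ≃ Fin 2 × κ) :
    kroneckerRep e e₁ = diagonal fun j => if (e j).1 = 0 then Complex.I else -Complex.I := by
  have he₁ : (e₁ : Matrix (Fin 2) (Fin 2) ℂ) = diagonal ![Complex.I, -Complex.I] := by
    ext i j; fin_cases i <;> fin_cases j <;> simp [e₁]
  rw [kroneckerRep_apply, he₁, ← diagonal_one, diagonal_kronecker_diagonal,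
    submatrix_diagonal_equiv]
  congr 1
  funext j
  split_ifs with h
  · simp [h]
  · simp [Fin.eq_one_of_ne_zero _ h]

end KroneckerRep

end su2

theorem diagonal_in_su2_subalgebra_of_u_iff_general
    {k : ℕ} (ε : Fin k → ℝ) (hε : ∀ j, ε j = 1 ∨ ε j = -1) :
    ((∃ f : su2 →ₗ⁅ℝ⁆ Matrix (Fin k) (Fin k) ℂ,
        (∀ X : su2, (f X)ᴴ = -(f X)) ∧
        Matrix.diagonal (fun j => (ε j : ℂ) * Complex.I) ∈ Set.range f) →
      (Even k ∧ (Finset.univ.filter fun j => ε j = 1).card = k / 2)) ∧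
    (Even k →
      ∃ f : su2 →ₗ⁅ℝ⁆ Matrix (Fin k) (Fin k) ℂ,
        (∀ X : su2, (f X)ᴴ = -(f X)) ∧
        Matrix.diagonal (fun j : Fin k => if (j : ℕ) < k / 2 then Complex.I else -Complex.I)
          ∈ Set.range f) := by
  refine ⟨?_, ?_⟩
  · rintro ⟨f, -, X, hX⟩
    have htrace := LieHom.trace_eq_zero_of_lie_top_eq_top su2.lie_top_eq_top f X
    rw [hX, trace_diagonal, ← Finset.sum_mul, mul_eq_zero, or_iff_left Complex.I_ne_zero] at htrace
    have hcard := two_mul_card_filter_eq_one_of_sum_eq_zero ε hε (by exact_mod_cast htrace)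
    rw [Fintype.card_fin] at hcard
    exact ⟨Nat.even_iff.mpr (by omega), by omega⟩
  · rintro ⟨m, rfl⟩
    let e : Fin (m + m) ≃ Fin 2 × Fin m := (finCongr (two_mul m).symm).trans finProdFinEquiv.symm
    have he : ∀ j, (e j).1 = 0 ↔ (j : ℕ) < (m + m) / 2 := fun j => by
      simp only [e, Equiv.trans_apply, finCongr_apply, finProdFinEquiv_symm_apply, Fin.divNat,
        Fin.val_cast, Fin.ext_iff, Fin.coe_ofNat_eq_mod, Nat.zero_mod, Nat.div_eq_zero_iff]
      omega
    refine ⟨su2.kroneckerRep e, su2.kroneckerRep_conjTranspose e, su2.e₁, ?_⟩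
    simp only [su2.kroneckerRep_e₁, he]

/-- A diagonal matrix `diag(ε₁ i, …, ε_k i)` with `εⱼ = ±1` lies in the image of a Lie
algebra homomorphism of `su(2)` into `u(k)` iff `k` is even and exactly `k/2` of the `εⱼ`
equal `+1` (and in the even case such a homomorphism exists hitting the balanced diagonal). -/
theorem diagonal_in_su2_subalgebra_of_u_iff
    {k : ℕ} (hk : 1 ≤ k) (ε : Fin k → ℝ) (hε : ∀ j, ε j = 1 ∨ ε j = -1) :
    ((∃ f : su2 →ₗ⁅ℝ⁆ Matrix (Fin k) (Fin k) ℂ,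
        (∀ X : su2, (f X)ᴴ = -(f X)) ∧
        Matrix.diagonal (fun j => (ε j : ℂ) * Complex.I) ∈ Set.range f) →
      (Even k ∧ (Finset.univ.filter fun j => ε j = 1).card = k / 2)) ∧
    (Even k →
      ∃ f : su2 →ₗ⁅ℝ⁆ Matrix (Fin k) (Fin k) ℂ,
        (∀ X : su2, (f X)ᴴ = -(f X)) ∧
        Matrix.diagonal (fun j : Fin k => if (j : ℕ) < k / 2 then Complex.I else -Complex.I)
          ∈ Set.range f) :=
  diagonal_in_su2_subalgebra_of_u_iff_general ε hε
end
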